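/- Let τ ≥ 0. Assume H is Hermitian, Π is an orthogonal projection (Π² = Π = Πᴴ) with complement Π^⊥ := 1 − Π, H̃ := ΠHΠ, H₀ is a matrix such that H − H₀ commutes with Π, ρ is PSD, and O is Hermitian. Then | tr[ exp(iτH)·O·( exp(−iτH) − exp(−iτH̃) )·ρ ] | ≤ ‖Π^⊥·√ρ‖_F·( ‖Π^⊥·exp(iτH)·O·exp(−iτH)·√ρ‖_F + ‖Π^⊥·O·exp(−iτH)·√ρ‖_F ) + ∫₀^τ ‖√ρ·exp(iτH)·O·exp(−iτ₁H)·Π^⊥‖_F · ‖Π^⊥·H₀·Π·exp(−i(τ−τ₁)H̃)·√ρ‖_F dτ₁. -/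

import Mathlib

/-!
Split `e^{-iτH} - e^{-iτH̃}` along `1 = Π^⊥ + Π`.

Since `H̃ Π^⊥ = 0`, the exponential series gives `e^{-iτH̃} Π^⊥ = Π^⊥`, so with `S = √ρ`,
`U = e^{iτH}` and `Uᴴ = e^{-iτH}` the `Π^⊥`-part of the trace is
`tr[(Π^⊥ U O Uᴴ S)ᴴ (Π^⊥ S)] - tr[(Π^⊥ O Uᴴ S)ᴴ (Π^⊥ S)]`, and each term is bounded by
Cauchy–Schwarz for the Frobenius inner product `tr(Aᴴ B)`.

For the `Π`-part, Duhamel's formula `e^{τA} - e^{τB} = ∫₀^τ e^{tA} (A - B) e^{(τ-t)B} dt`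
together with `[H̃, Π] = 0` and `(H - H̃) Π = Π^⊥ H₀ Π` (because `H - H₀` commutes with `Π`)
writes `(e^{-iτH} - e^{-iτH̃}) Π` as `∫₀^τ -i e^{-iτ₁H} Π^⊥ H₀ Π e^{-i(τ-τ₁)H̃} dτ₁`.
Inserting `Π^⊥ = (Π^⊥)²` and applying Cauchy–Schwarz under the integral gives the second term.
-/

open scoped Matrix ComplexOrder

/-- The positive semidefinite square root of a positive semidefinite matrix
(the definition of the older Mathlib, since removed there). -/
noncomputable def Matrix.PosSemidef.sqrt {n 𝕜 : Type*} [Fintype n] [RCLike 𝕜] [DecidableEq n]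
    {A : Matrix n n 𝕜} (hA : A.PosSemidef) : Matrix n n 𝕜 :=
  hA.1.eigenvectorUnitary.1 * Matrix.diagonal ((↑) ∘ (√·) ∘ hA.1.eigenvalues) *
  (star hA.1.eigenvectorUnitary : Matrix n n 𝕜)

/-- Frobenius norm `‖A‖_F = √(tr (Aᴴ A))`. -/
noncomputable def frobNorm {n : ℕ} (A : Matrix (Fin n) (Fin n) ℂ) : ℝ :=
  Real.sqrt ((Aᴴ * A).trace.re)

open NormedSpace

section Projection

variable {R : Type*} [Ring R] {P : R}

theorem compression_mul_one_sub (hP : P * P = P) (H : R) : P * H * P * (1 - P) = 0 := by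
  rw [mul_sub, mul_one, mul_assoc _ P P, hP, sub_self]

theorem commute_compression (hP : P * P = P) (H : R) : Commute (P * H * P) P := by
  rw [Commute, SemiconjBy, mul_assoc, hP, ← mul_assoc, ← mul_assoc, hP]

theorem sub_compression_mul_self (hP : P * P = P) {H H₀ : R}
    (hcomm : (H - H₀) * P = P * (H - H₀)) : (H - P * H * P) * P = (1 - P) * H₀ * P := by
  have hcompl : (1 - P) * (H - H₀) * P = 0 := by
    rw [mul_assoc, hcomm, ← mul_assoc, sub_mul, one_mul, hP, sub_self, zero_mul]
  rw [← sub_eq_zero, ← hcompl]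
  simp only [sub_mul, mul_sub, one_mul, mul_assoc, hP]

end Projection

theorem neg_I_mul_ofReal_smul {E : Type*} [AddCommGroup E] [Module ℂ E] (t : ℝ) (x : E) :
    (-(Complex.I * t)) • x = t • ((-Complex.I) • x) := by
  rw [← smul_assoc, Complex.real_smul, mul_neg, mul_comm]

section BanachAlgebra

variable {𝔸 : Type*} [NormedRing 𝔸] [NormedAlgebra ℝ 𝔸] [CompleteSpace 𝔸]

theorem exp_mul_eq_self_of_mul_eq_zero {x y : 𝔸} (h : x * y = 0) : exp x * y = y := by
  refine (((exp_series_hasSum_exp' (𝕂 := ℝ) x).mul_right y).unique (hasSum_single 0 ?_)).trans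
    (by simp)
  intro k hk
  obtain ⟨m, rfl⟩ := Nat.exists_eq_succ_of_ne_zero hk
  rw [smul_mul_assoc, pow_succ, mul_assoc, h, mul_zero, smul_zero]

theorem continuous_exp_real_smul (A : 𝔸) : Continuous fun t : ℝ => exp (t • A) :=
  continuous_iff_continuousAt.2 fun t => (hasDerivAt_exp_smul_const (𝕂 := ℝ) A t).continuousAt

theorem exp_sub_exp_mul_eq_intervalIntegral (A B C : 𝔸) (τ : ℝ) :
    (exp (τ • A) - exp (τ • B)) * C
      = ∫ t in (0 : ℝ)..τ, exp (t • A) * (A - B) * exp ((τ - t) • B) * C := by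
  have hderiv : ∀ t : ℝ, HasDerivAt (fun s : ℝ => exp (s • A) * exp ((τ - s) • B) * C)
      (exp (t • A) * (A - B) * exp ((τ - t) • B) * C) t := by
    intro t
    have hB := (hasDerivAt_exp_smul_const' (𝕂 := ℝ) B (τ - t)).scomp t
      ((hasDerivAt_id t).const_sub τ)
    convert ((hasDerivAt_exp_smul_const (𝕂 := ℝ) A t).mul hB).mul_const C using 1
    · rfl
    rw [neg_one_smul, Function.comp_apply, mul_neg, mul_sub, sub_mul, ← mul_assoc,
      sub_eq_add_neg]
  have hc : Continuous fun t : ℝ => exp (t • A) * (A - B) * exp ((τ - t) • B) * C :=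
    (((continuous_exp_real_smul A).mul continuous_const).mul
      ((continuous_exp_real_smul B).comp (continuous_sub_left τ))).mul continuous_const
  rw [intervalIntegral.integral_eq_sub_of_hasDerivAt (fun t _ => hderiv t)
    (hc.intervalIntegrable _ _)]
  simp [sub_mul]

end BanachAlgebra

section ComplexBanachAlgebra

variable {𝔸 : Type*} [NormedRing 𝔸] [NormedAlgebra ℂ 𝔸] [CompleteSpace 𝔸] {H P H₀ : 𝔸}

theorem exp_compression_mul_one_sub (hP : P * P = P) (c : ℂ) :
    exp (c • (P * H * P)) * (1 - P) = 1 - P :=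
  exp_mul_eq_self_of_mul_eq_zero (by rw [smul_mul_assoc, compression_mul_one_sub hP, smul_zero])

theorem exp_sub_exp_compression_mul_eq_intervalIntegral (τ : ℝ) (hP : P * P = P)
    (hcomm : (H - H₀) * P = P * (H - H₀)) :
    (exp ((-(Complex.I * τ)) • H) - exp ((-(Complex.I * τ)) • (P * H * P))) * P
      = ∫ t in (0 : ℝ)..τ, (-Complex.I) • (exp ((-(Complex.I * t)) • H) * ((1 - P) * H₀ * P)
          * exp ((-(Complex.I * ((τ : ℂ) - (t : ℂ)))) • (P * H * P))) := by
  simp only [← Complex.ofReal_sub, neg_I_mul_ofReal_smul]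
  have hdefect : ((-Complex.I) • H - (-Complex.I) • (P * H * P)) * P
      = (-Complex.I) • ((1 - P) * H₀ * P) := by
    rw [← smul_sub, smul_mul_assoc, sub_compression_mul_self hP hcomm]
  rw [exp_sub_exp_mul_eq_intervalIntegral]
  refine intervalIntegral.integral_congr fun t _ => ?_
  rw [mul_assoc _ _ P,
    ((((commute_compression hP H).smul_left (-Complex.I)).smul_left (τ - t)).exp_left).eq,
    ← mul_assoc, mul_assoc _ _ P, hdefect, mul_smul_comm, smul_mul_assoc]

end ComplexBanachAlgebra

namespace Matrix.PosSemidef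

variable {n 𝕜 : Type*} [Fintype n] [RCLike 𝕜] [DecidableEq n] {A : Matrix n n 𝕜}

theorem isHermitian_sqrt (hA : A.PosSemidef) : hA.sqrt.IsHermitian := by
  simp [IsHermitian, sqrt, conjTranspose_mul, diagonal_conjTranspose, Matrix.mul_assoc,
    Function.comp_def, star_eq_conjTranspose, Pi.star_def]

theorem sqrt_mul_self (hA : A.PosSemidef) : hA.sqrt * hA.sqrt = A := by
  have hD : diagonal ((RCLike.ofReal ∘ (√·) ∘ hA.1.eigenvalues) : n → 𝕜)
      * diagonal (RCLike.ofReal ∘ (√·) ∘ hA.1.eigenvalues)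
      = diagonal (RCLike.ofReal ∘ hA.1.eigenvalues) := by
    rw [diagonal_mul_diagonal]
    congr 1
    funext i
    simp only [Function.comp_apply, ← RCLike.ofReal_mul,
      Real.mul_self_sqrt (hA.eigenvalues_nonneg i)]
  conv_rhs => rw [hA.1.spectral_theorem, Unitary.conjStarAlgAut_apply, ← hD]
  simp only [sqrt, Matrix.mul_assoc]
  rw [← Matrix.mul_assoc _ (hA.1.eigenvectorUnitary : Matrix n n 𝕜), Unitary.coe_star_mul_self,
    Matrix.one_mul]

end Matrix.PosSemidef

section Frobenius

variable {n : ℕ}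

theorem frobNorm_eq_norm (A : Matrix (Fin n) (Fin n) ℂ) :
    frobNorm A = ‖WithLp.toLp 2 A.vec‖ := by
  rw [frobNorm, EuclideanSpace.norm_eq, ← Matrix.star_vec_dotProduct_vec]
  congr 1
  simp [dotProduct, Complex.sq_norm, Complex.normSq_apply]

theorem trace_conjTranspose_mul_eq_inner (A B : Matrix (Fin n) (Fin n) ℂ) :
    (Aᴴ * B).trace = inner ℂ (WithLp.toLp 2 A.vec) (WithLp.toLp 2 B.vec) := by
  rw [EuclideanSpace.inner_eq_star_dotProduct, dotProduct_comm, ← Matrix.star_vec_dotProduct_vec]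

theorem norm_trace_conjTranspose_mul_le (A B : Matrix (Fin n) (Fin n) ℂ) :
    ‖(Aᴴ * B).trace‖ ≤ frobNorm A * frobNorm B := by
  rw [trace_conjTranspose_mul_eq_inner, frobNorm_eq_norm, frobNorm_eq_norm]
  exact norm_inner_le_norm _ _

theorem frobNorm_conjTranspose (A : Matrix (Fin n) (Fin n) ℂ) : frobNorm Aᴴ = frobNorm A := by
  rw [frobNorm, frobNorm, Matrix.conjTranspose_conjTranspose, Matrix.trace_mul_comm]

theorem norm_trace_mul_le (A B : Matrix (Fin n) (Fin n) ℂ) :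
    ‖(A * B).trace‖ ≤ frobNorm A * frobNorm B := by
  simpa [frobNorm_conjTranspose] using norm_trace_conjTranspose_mul_le Aᴴ B

@[fun_prop]
theorem continuous_frobNorm : Continuous (frobNorm (n := n)) := by
  simp only [funext frobNorm_eq_norm]
  exact continuous_norm.comp <| (PiLp.continuous_toLp 2 _).comp <|
    continuous_pi fun p => continuous_id.matrix_elem p.2 p.1

end Frobenius

section MatrixEstimates

variable {n : ℕ}

local notation "M" => Matrix (Fin n) (Fin n) ℂ

theorem trace_mul_idem_mul_eq {X Y Q S ρ : M} (hQ : Q * Q = Q) (hSρ : S * S = ρ) :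
    (X * Q * Y * ρ).trace = ((S * X * Q) * (Q * Y * S)).trace := by
  rw [← hSρ, show S * X * Q * (Q * Y * S) = S * X * (Q * Q) * Y * S by noncomm_ring, hQ,
    Matrix.trace_mul_comm _ S, Matrix.trace_mul_comm (X * Q * Y)]
  congr 1
  simp only [Matrix.mul_assoc]

theorem norm_trace_mul_sub_mul_le {U V W O Q S ρ : M} (hUV : Uᴴ = V) (hO : O.IsHermitian)
    (hQ : Q * Q = Q) (hQH : Qᴴ = Q) (hS : Sᴴ = S) (hSρ : S * S = ρ) (hWQ : W * Q = Q) :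
    ‖(U * O * (V - W) * Q * ρ).trace‖
      ≤ frobNorm (Q * S) * (frobNorm (Q * U * O * V * S) + frobNorm (Q * O * V * S)) := by
  have hVU : Vᴴ = U := by rw [← hUV, Matrix.conjTranspose_conjTranspose]
  have h1 : (U * O * V * Q * ρ).trace = ((Q * U * O * V * S)ᴴ * (Q * S)).trace := by
    rw [← Matrix.mul_one (U * O * V * Q), trace_mul_idem_mul_eq hQ hSρ]
    simp only [Matrix.conjTranspose_mul, hQH, hS, hO.eq, hVU, hUV, Matrix.mul_one, Matrix.mul_assoc]
  have h2 : (U * O * Q * ρ).trace = ((Q * O * V * S)ᴴ * (Q * S)).trace := by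
    rw [← Matrix.mul_one (U * O * Q), trace_mul_idem_mul_eq hQ hSρ]
    simp only [Matrix.conjTranspose_mul, hQH, hS, hO.eq, hVU, Matrix.mul_one, Matrix.mul_assoc]
  have hsplit : U * O * (V - W) * Q * ρ = U * O * V * Q * ρ - U * O * Q * ρ := by
    rw [Matrix.mul_assoc (U * O), Matrix.sub_mul, hWQ]
    noncomm_ring
  rw [hsplit, Matrix.trace_sub, h1, h2]
  calc _ ≤ ‖((Q * U * O * V * S)ᴴ * (Q * S)).trace‖ + ‖((Q * O * V * S)ᴴ * (Q * S)).trace‖ :=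
        norm_sub_le _ _
    _ ≤ frobNorm (Q * U * O * V * S) * frobNorm (Q * S)
          + frobNorm (Q * O * V * S) * frobNorm (Q * S) :=
        add_le_add (norm_trace_conjTranspose_mul_le _ _) (norm_trace_conjTranspose_mul_le _ _)
    _ = _ := by ring

theorem Matrix.IsHermitian.conjTranspose_exp_I_mul_smul {m : Type*} [Fintype m] [DecidableEq m]
    {H : Matrix m m ℂ} (hH : H.IsHermitian) (τ : ℝ) :
    (NormedSpace.exp ((Complex.I * τ) • H))ᴴ = NormedSpace.exp ((-(Complex.I * τ)) • H) := by
  rw [← Matrix.exp_conjTranspose, Matrix.conjTranspose_smul, hH.eq, star_mul', Complex.star_def,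
    Complex.conj_I, Complex.conj_ofReal, neg_mul]

section

attribute [local instance] Matrix.linftyOpNormedRing Matrix.linftyOpNormedAlgebra

theorem norm_trace_mul_exp_sub_exp_compression_mul_one_sub_le {U V O P H S ρ : M} (c : ℂ)
    (hUV : Uᴴ = V) (hO : O.IsHermitian) (hP : P * P = P) (hPH : Pᴴ = P) (hS : Sᴴ = S)
    (hSρ : S * S = ρ) :
    ‖(U * O * (V - exp (c • (P * H * P))) * (1 - P) * ρ).trace‖
      ≤ frobNorm ((1 - P) * S)
        * (frobNorm ((1 - P) * U * O * V * S) + frobNorm ((1 - P) * O * V * S)) := by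
  refine norm_trace_mul_sub_mul_le hUV hO (IsIdempotentElem.one_sub hP) ?_ hS hSρ
    (exp_compression_mul_one_sub hP c)
  rw [Matrix.conjTranspose_sub, Matrix.conjTranspose_one, hPH]

theorem trace_mul_intervalIntegral_mul (X R : M) {k : ℝ → M} (hk : Continuous k) (a b : ℝ) :
    (X * (∫ t in a..b, k t) * R).trace = ∫ t in a..b, (X * k t * R).trace := by
  let L : M →L[ℂ] ℂ := LinearMap.toContinuousLinearMap
    (Matrix.traceLinearMap (Fin n) ℂ ℂ ∘ₗ LinearMap.mulLeft ℂ X ∘ₗ LinearMap.mulRight ℂ R)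
  simp only [Matrix.mul_assoc]
  exact (L.intervalIntegral_comp_comm (hk.intervalIntegrable (μ := MeasureTheory.volume) a b)).symm

theorem norm_trace_mul_exp_sub_exp_compression_mul_le {τ : ℝ} (hτ : 0 ≤ τ)
    {X H P H₀ S ρ : M} (hP : P * P = P) (hcomm : (H - H₀) * P = P * (H - H₀))
    (hSρ : S * S = ρ) :
    ‖(X * (exp ((-(Complex.I * τ)) • H) - exp ((-(Complex.I * τ)) • (P * H * P))) * P * ρ).trace‖
      ≤ ∫ t in (0 : ℝ)..τ, frobNorm (S * X * exp ((-(Complex.I * t)) • H) * (1 - P))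
          * frobNorm ((1 - P) * H₀ * P
            * exp ((-(Complex.I * ((τ : ℂ) - (t : ℂ)))) • (P * H * P)) * S) := by
  have hQ : (1 - P) * (1 - P) = 1 - P := IsIdempotentElem.one_sub hP
  -- stated with its type, so that `*` is matrix multiplication and not the `Mul.mul` of the
  -- general lemma, which `rw` would not match
  have hD : (exp ((-(Complex.I * τ)) • H) - exp ((-(Complex.I * τ)) • (P * H * P))) * P
      = ∫ t in (0 : ℝ)..τ, (-Complex.I) • (exp ((-(Complex.I * t)) • H) * ((1 - P) * H₀ * P)
          * exp ((-(Complex.I * ((τ : ℂ) - (t : ℂ)))) • (P * H * P))) :=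
    exp_sub_exp_compression_mul_eq_intervalIntegral τ hP hcomm
  rw [Matrix.mul_assoc X, hD, trace_mul_intervalIntegral_mul _ _ (by fun_prop)]
  refine intervalIntegral.norm_integral_le_of_norm_le hτ (Filter.Eventually.of_forall fun t _ => ?_)
    (Continuous.intervalIntegrable (by fun_prop) _ _)
  rw [Matrix.mul_smul, Matrix.smul_mul, Matrix.trace_smul, norm_smul, norm_neg, Complex.norm_I,
    one_mul]
  set E := exp ((-(Complex.I * t)) • H)
  set F := exp ((-(Complex.I * ((τ : ℂ) - (t : ℂ)))) • (P * H * P))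
  rw [show X * (E * ((1 - P) * H₀ * P) * F) * ρ = X * E * (1 - P) * (H₀ * P * F) * ρ by
    simp only [Matrix.mul_assoc], trace_mul_idem_mul_eq hQ hSρ]
  rw [show S * (X * E) * (1 - P) * ((1 - P) * (H₀ * P * F) * S)
      = S * X * E * (1 - P) * ((1 - P) * H₀ * P * F * S) by simp only [Matrix.mul_assoc]]
  exact norm_trace_mul_le _ _

end

end MatrixEstimates

/-- First-order error estimate for the effective-Hamiltonian comparison:
`|tr[e^{iτH}·O·(e^{−iτH} − e^{−iτH̃})·ρ]|` is bounded by the Cauchy–Schwarz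
term on the `Π^⊥`-component plus the Duhamel integral term, where
`H̃ = ΠHΠ` and `Π^⊥ = 1 − Π`. -/
theorem stmt_12 {n : ℕ} (τ : ℝ) (hτ : 0 ≤ τ)
    (H P H₀ ρ O : Matrix (Fin n) (Fin n) ℂ)
    (hH : H.IsHermitian)
    (hP2 : P * P = P) (hPH : Pᴴ = P)
    (hcomm : (H - H₀) * P = P * (H - H₀))
    (hρ : ρ.PosSemidef) (hO : O.IsHermitian) :
    ‖((NormedSpace.exp ((Complex.I * (τ : ℂ)) • H) * O *
            (NormedSpace.exp ((-(Complex.I * (τ : ℂ))) • H)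
              - NormedSpace.exp ((-(Complex.I * (τ : ℂ))) • (P * H * P))) *
            ρ).trace)‖
      ≤ frobNorm (((1 : Matrix (Fin n) (Fin n) ℂ) - P) * hρ.sqrt) *
          (frobNorm (((1 : Matrix (Fin n) (Fin n) ℂ) - P)
              * NormedSpace.exp ((Complex.I * (τ : ℂ)) • H) * O
              * NormedSpace.exp ((-(Complex.I * (τ : ℂ))) • H) * hρ.sqrt)
            + frobNorm (((1 : Matrix (Fin n) (Fin n) ℂ) - P) * O
              * NormedSpace.exp ((-(Complex.I * (τ : ℂ))) • H) * hρ.sqrt))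
        + ∫ τ₁ in (0:ℝ)..τ,
            frobNorm (hρ.sqrt
                * NormedSpace.exp ((Complex.I * (τ : ℂ)) • H) * O
                * NormedSpace.exp ((-(Complex.I * (τ₁ : ℂ))) • H)
                * ((1 : Matrix (Fin n) (Fin n) ℂ) - P))
              * frobNorm (((1 : Matrix (Fin n) (Fin n) ℂ) - P) * H₀ * P
                * NormedSpace.exp
                    ((-(Complex.I * ((τ : ℂ) - (τ₁ : ℂ)))) • (P * H * P))
                * hρ.sqrt) := by
  set U := exp ((Complex.I * (τ : ℂ)) • H)
  set X := exp ((-(Complex.I * (τ : ℂ))) • H) - exp ((-(Complex.I * (τ : ℂ))) • (P * H * P))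
  have hsplit : U * O * X * ρ = U * O * X * (1 - P) * ρ + U * O * X * P * ρ := by noncomm_ring
  rw [hsplit, Matrix.trace_add]
  refine (norm_add_le _ _).trans (add_le_add ?_ ?_)
  · exact norm_trace_mul_exp_sub_exp_compression_mul_one_sub_le _
      (hH.conjTranspose_exp_I_mul_smul τ) hO hP2 hPH hρ.isHermitian_sqrt hρ.sqrt_mul_self
  · simpa only [← Matrix.mul_assoc] using
      norm_trace_mul_exp_sub_exp_compression_mul_le (X := U * O) hτ hP2 hcomm hρ.sqrt_mul_self
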